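/- Let Z ∼ N(0,1), a > 0, b ≥ 0, and let H(x, y) = x²/2 if |x| ≤ y and y(|x| − y/2) otherwise be the Huber loss. Then E[H(aZ, b)] = ((a² + b²)/2)·erf(b/(√2·a)) − b²/2 + (a·b/√(2π))·exp(−b²/(2a²)). -/

import Mathlib

open MeasureTheory ProbabilityTheory Real

/-- The Gauss error function. -/
noncomputable def erf (x : ℝ) : ℝ := (2 / Real.sqrt π) * ∫ t in (0:ℝ)..x, Real.exp (-t^2)

/-- The Huber loss with threshold `y`. -/
noncomputable def huber (x y : ℝ) : ℝ := if |x| ≤ y then x^2/2 else y*(|x| - y/2)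

/-!
Since `H(a x, b) = a² H(x, b / a)`, it suffices to take `a = 1`. The loss `H(·, c)` is even,
so its expectation is twice the integral over `(0, ∞)` against the density `e^{-t²/2}/√(2π)`.
There the loss is `t²/2` on `(0, c]` and `c t - c²/2` on `(c, ∞)`; the pieces follow from
`∫₀ᶜ e^{-t²/2} = √(2π)/2 · erf(c/√2)`, the antiderivative `-e^{-t²/2}` of
`t e^{-t²/2}`, and `(t² - 1) e^{-t²/2} = (-t e^{-t²/2})'`.
-/

open Set Filter Topology

lemma huber_abs (x y : ℝ) : huber |x| y = huber x y := by
  simp only [huber, abs_abs, sq_abs]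

lemma huber_mul_left {a : ℝ} (ha : 0 < a) (x b : ℝ) :
    huber (a * x) b = a ^ 2 * huber x (b / a) := by
  have habs : |a * x| = a * |x| := by rw [abs_mul, abs_of_pos ha]
  have hle : a * |x| ≤ b ↔ |x| ≤ b / a := by rw [le_div_iff₀ ha, mul_comm]
  simp only [huber, habs, hle]
  split_ifs
  · ring
  · field_simp

lemma hasDerivAt_exp_neg_sq_div_two (t : ℝ) :
    HasDerivAt (fun t => exp (-t ^ 2 / 2)) (-t * exp (-t ^ 2 / 2)) t := by
  have h : HasDerivAt (fun t : ℝ => -t ^ 2 / 2) (-t) t := by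
    simpa using (((hasDerivAt_pow 2 t).neg).div_const 2).congr_deriv (by ring)
  simpa [mul_comm] using h.exp

lemma integral_exp_neg_sq_div_two (c : ℝ) :
    ∫ t in (0 : ℝ)..c, exp (-t ^ 2 / 2) = √(2 * π) / 2 * erf (c / √2) := by
  have hsqrt2 : √2 ≠ 0 := by positivity
  have hsub := intervalIntegral.integral_comp_div (a := 0) (b := c)
    (fun u => exp (-u ^ 2)) hsqrt2
  simp only [zero_div, smul_eq_mul, div_pow, sq_sqrt (zero_le_two : (0 : ℝ) ≤ 2)] at hsub
  rw [show (fun t : ℝ => exp (-t ^ 2 / 2)) = fun t => exp (-(t ^ 2 / 2)) by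
    funext t; ring_nf, hsub, erf, sqrt_mul zero_le_two]
  field_simp

lemma integrable_exp_neg_sq_div_two : Integrable fun t : ℝ => exp (-t ^ 2 / 2) := by
  simpa [neg_div, div_eq_inv_mul] using integrable_exp_neg_mul_sq (by norm_num : (0 : ℝ) < 1 / 2)

lemma integrable_mul_exp_neg_sq_div_two : Integrable fun t : ℝ => t * exp (-t ^ 2 / 2) := by
  simpa [neg_div, div_eq_inv_mul] using
    integrable_mul_exp_neg_mul_sq (by norm_num : (0 : ℝ) < 1 / 2)

lemma integral_Ioi_exp_neg_sq_div_two (c : ℝ) :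
    ∫ t in Ioi c, exp (-t ^ 2 / 2) = √(2 * π) / 2 * (1 - erf (c / √2)) := by
  have hhalf : ∫ t in Ioi (0 : ℝ), exp (-t ^ 2 / 2) = √(2 * π) / 2 := by
    simpa [neg_div, div_eq_inv_mul] using integral_gaussian_Ioi (1 / 2)
  have := intervalIntegral.integral_Ioi_sub_Ioi' integrable_exp_neg_sq_div_two.integrableOn
    integrable_exp_neg_sq_div_two.integrableOn (a := 0) (b := c)
  rw [integral_exp_neg_sq_div_two, hhalf] at this
  linarith

lemma integral_Ioi_mul_exp_neg_sq_div_two (c : ℝ) :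
    ∫ t in Ioi c, t * exp (-t ^ 2 / 2) = exp (-c ^ 2 / 2) := by
  have hlim : Tendsto (fun t : ℝ => -exp (-t ^ 2 / 2)) atTop (𝓝 0) := by
    have h : Tendsto (fun t : ℝ => -t ^ 2 / 2) atTop atBot :=
      (tendsto_neg_atTop_atBot.comp (tendsto_pow_atTop two_ne_zero)).atBot_div_const two_pos
    simpa using (tendsto_exp_atBot.comp h).neg
  have hderiv (t : ℝ) : HasDerivAt (fun t => -exp (-t ^ 2 / 2)) (t * exp (-t ^ 2 / 2)) t :=
    (hasDerivAt_exp_neg_sq_div_two t).neg.congr_deriv (by ring)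
  simpa using integral_Ioi_of_hasDerivAt_of_tendsto' (a := c) (fun t _ => hderiv t)
    integrable_mul_exp_neg_sq_div_two.integrableOn hlim

lemma integral_sq_mul_exp_neg_sq_div_two (c : ℝ) :
    ∫ t in (0 : ℝ)..c, t ^ 2 * exp (-t ^ 2 / 2)
      = (∫ t in (0 : ℝ)..c, exp (-t ^ 2 / 2)) - c * exp (-c ^ 2 / 2) := by
  have hderiv (t : ℝ) : HasDerivAt (fun t => -t * exp (-t ^ 2 / 2))
      (t ^ 2 * exp (-t ^ 2 / 2) - exp (-t ^ 2 / 2)) t :=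
    ((hasDerivAt_neg t).mul (hasDerivAt_exp_neg_sq_div_two t)).congr_deriv (by ring)
  have hftc := intervalIntegral.integral_eq_sub_of_hasDerivAt (fun t _ => hderiv t)
    (Continuous.intervalIntegrable (by fun_prop) 0 c)
  rw [intervalIntegral.integral_sub (Continuous.intervalIntegrable (by fun_prop) 0 c)
    (Continuous.intervalIntegrable (by fun_prop) 0 c)] at hftc
  simp only [neg_zero, zero_mul, sub_zero] at hftc
  linarith

lemma integral_Ioi_exp_neg_sq_div_two_mul_huber {c : ℝ} (hc : 0 ≤ c) :
    ∫ t in Ioi 0, exp (-t ^ 2 / 2) * huber t c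
      = √(2 * π) / 2 * ((1 + c ^ 2) / 2 * erf (c / √2) - c ^ 2 / 2)
        + c / 2 * exp (-c ^ 2 / 2) := by
  set F : ℝ → ℝ := fun t => exp (-t ^ 2 / 2) * huber t c
  have hinner : EqOn F (fun t => t ^ 2 * exp (-t ^ 2 / 2) / 2) (uIcc 0 c) := by
    intro t ht
    rw [uIcc_of_le hc] at ht
    have hle : |t| ≤ c := abs_le.2 ⟨by linarith [ht.1], ht.2⟩
    simp only [F, huber, if_pos hle]
    ring
  have houter : EqOn F
      (fun t => c * (t * exp (-t ^ 2 / 2)) - c ^ 2 / 2 * exp (-t ^ 2 / 2)) (Ioi c) := by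
    intro t (ht : c < t)
    have habs : |t| = t := abs_of_pos (hc.trans_lt ht)
    simp only [F, huber, habs, if_neg ht.not_ge]
    ring
  have hint_inner : IntervalIntegrable F volume 0 c :=
    ((Continuous.continuousOn (by fun_prop)).congr hinner).intervalIntegrable
  have hint_outer : IntegrableOn F (Ioi c) :=
    ((integrable_mul_exp_neg_sq_div_two.const_mul c).sub
      (integrable_exp_neg_sq_div_two.const_mul _)).integrableOn.congr_fun houter.symm
      measurableSet_Ioi
  rw [← intervalIntegral.integral_interval_add_Ioi' hint_inner hint_outer,
    intervalIntegral.integral_congr hinner, setIntegral_congr_fun measurableSet_Ioi houter,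
    intervalIntegral.integral_div, integral_sq_mul_exp_neg_sq_div_two,
    integral_exp_neg_sq_div_two,
    integral_sub (integrable_mul_exp_neg_sq_div_two.const_mul c).integrableOn
      (integrable_exp_neg_sq_div_two.const_mul _).integrableOn,
    integral_const_mul, integral_const_mul, integral_Ioi_mul_exp_neg_sq_div_two,
    integral_Ioi_exp_neg_sq_div_two]
  ring

lemma integral_huber_gaussianReal {c : ℝ} (hc : 0 ≤ c) :
    ∫ z, huber z c ∂(gaussianReal 0 1)
      = (1 + c ^ 2) / 2 * erf (c / √2) - c ^ 2 / 2 + c / √(2 * π) * exp (-c ^ 2 / 2) := by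
  have hpdf (z : ℝ) : gaussianPDFReal 0 1 z • huber z c
      = (√(2 * π))⁻¹ * (exp (-|z| ^ 2 / 2) * huber |z| c) := by
    simp [gaussianPDFReal, huber_abs, sq_abs, mul_assoc]
  rw [integral_gaussianReal_eq_integral_smul one_ne_zero]
  simp_rw [hpdf]
  rw [integral_const_mul, integral_comp_abs (f := fun t => exp (-t ^ 2 / 2) * huber t c),
    integral_Ioi_exp_neg_sq_div_two_mul_huber hc]
  field_simp

theorem stmt15 (a b : ℝ) (ha : 0 < a) (hb : 0 ≤ b) :
    ∫ z, huber (a*z) b ∂(gaussianReal 0 1)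
      = ((a^2 + b^2)/2) * erf (b/(Real.sqrt 2 * a)) - b^2/2
        + (a*b/Real.sqrt (2*π)) * Real.exp (-b^2/(2*a^2)) := by
  simp_rw [huber_mul_left ha]
  rw [integral_const_mul, integral_huber_gaussianReal (div_nonneg hb ha.le), div_div,
    mul_comm (√2) a, div_pow, neg_div, neg_div, div_div, mul_comm _ (2 : ℝ)]
  field_simp
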